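/- Let m̂ ∈ P₂(ℝ^d), R > 0, φ ∈ UC_m̂, κ ∈ (0,1], ε ∈ (0,1], m ∈ B_R(m̂), and let μ̄ be an Ekeland point for (φ,κ,ε,m). Then: (1) W₂(m,μ̄) ≤ K_κ^ε(R); (2) W₂(m̂,μ̄) ≤ M^ε(R). -/

import Mathlib

open MeasureTheory Set Filter Topology
open scoped ENNReal NNReal InnerProductSpace

noncomputable section

/-- `ℝ^d` with the Euclidean structure. -/
abbrev Ed (d : ℕ) : Type := EuclideanSpace ℝ (Fin d)

/-- A Borel probability measure with finite second moment. -/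
def IsP2Meas {E : Type*} [NormedAddCommGroup E] [MeasurableSpace E] (μ : Measure E) : Prop :=
  IsProbabilityMeasure μ ∧ ∫⁻ x, (‖x‖₊ : ℝ≥0∞) ^ 2 ∂μ < ⊤

/-- The Wasserstein space `P₂(ℝ^d)` of Borel probability measures with finite second moment. -/
def P2 (d : ℕ) : Type := {μ : Measure (Ed d) // IsP2Meas μ}

/-- `ς₂(μ)`, the square root of the second moment of `μ`. -/
def varsigma2 {d : ℕ} (μ : P2 d) : ℝ :=
  Real.sqrt (∫⁻ x, (‖x‖₊ : ℝ≥0∞) ^ 2 ∂μ.1).toReal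

/-- `π` is a plan (coupling) between `μ` and `ν`. -/
def IsCoupling {d : ℕ} (π : Measure (Ed d × Ed d)) (μ ν : P2 d) : Prop :=
  π.map Prod.fst = μ.1 ∧ π.map Prod.snd = ν.1

/-- The quadratic transport cost of a plan. -/
def Wcost {d : ℕ} (π : Measure (Ed d × Ed d)) : ℝ≥0∞ :=
  ∫⁻ p, (‖p.1 - p.2‖₊ : ℝ≥0∞) ^ 2 ∂π

/-- The 2-Wasserstein distance. -/
def W2 {d : ℕ} (μ ν : P2 d) : ℝ :=
  Real.sqrt (⨅ π ∈ {π : Measure (Ed d × Ed d) | IsCoupling π μ ν}, Wcost π).toReal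

/-- `π ∈ Π_o(μ,ν)` : an optimal plan between `μ` and `ν`. -/
def IsOptPlan {d : ℕ} (π : Measure (Ed d × Ed d)) (μ ν : P2 d) : Prop :=
  IsCoupling π μ ν ∧ ∀ π' : Measure (Ed d × Ed d), IsCoupling π' μ ν → Wcost π ≤ Wcost π'

/-- The closed Wasserstein ball `B_R(m̂)`. -/
def ballW {d : ℕ} (mhat : P2 d) (R : ℝ) : Set (P2 d) := {μ | W2 mhat μ ≤ R}

/-- The open Wasserstein ball `O_R(m̂)`. -/
def oballW {d : ℕ} (mhat : P2 d) (R : ℝ) : Set (P2 d) := {μ | W2 mhat μ < R}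

/-- The Dirac measure at the origin as an element of `P₂(ℝ^d)`. -/
def dirac0 (d : ℕ) : P2 d :=
  ⟨Measure.dirac 0, ⟨by infer_instance, by rw [lintegral_dirac]; simp⟩⟩

/-- The class `UC_m̂` : nonnegative, uniformly continuous on every bounded set,
positive-definite at `m̂`. -/
structure UCmem {d : ℕ} (mhat : P2 d) (φ : P2 d → ℝ) : Prop where
  nonneg : ∀ μ : P2 d, 0 ≤ φ μ
  unif_cont : ∀ R > (0 : ℝ), ∀ η > (0 : ℝ), ∃ δ > (0 : ℝ), ∀ μ ν : P2 d,
    W2 mhat μ ≤ R → W2 mhat ν ≤ R → W2 μ ν ≤ δ → |φ μ - φ ν| ≤ η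
  zero_at : φ mhat = 0
  pos_off : ∀ μ : P2 d, μ ≠ mhat → 0 < φ μ

/-- The inf-convolution `φ_κ`. -/
def infConv {d : ℕ} (φ : P2 d → ℝ) (κ : ℝ) (m : P2 d) : ℝ :=
  ⨅ μ : P2 d, (φ μ + 1 / (2 * κ ^ 2) * W2 m μ ^ 2)

/-- `S(R) = sup_{μ ∈ B_R(m̂)} φ(μ)`. -/
def Sfun {d : ℕ} (mhat : P2 d) (φ : P2 d → ℝ) (R : ℝ) : ℝ := sSup (φ '' ballW mhat R)

/-- `I(R) = inf_{μ ∉ O_R(m̂)} φ(μ)`. -/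
def Ifun {d : ℕ} (mhat : P2 d) (φ : P2 d → ℝ) (R : ℝ) : ℝ := sInf (φ '' (oballW mhat R)ᶜ)

/-- `G_R = {μ : φ(μ) ≤ I(R)/2}`. -/
def Gset {d : ℕ} (mhat : P2 d) (φ : P2 d → ℝ) (R : ℝ) : Set (P2 d) :=
  {μ | φ μ ≤ Ifun mhat φ R / 2}

/-- `G_R^κ = {μ : φ_κ(μ) ≤ I(R)/2}`. -/
def GsetK {d : ℕ} (mhat : P2 d) (φ : P2 d → ℝ) (κ R : ℝ) : Set (P2 d) :=
  {μ | infConv φ κ μ ≤ Ifun mhat φ R / 2}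

/-- `𝓡(R) = sup{r ≥ 0 : B_r(m̂) ⊆ G_R}`. -/
def Rfun {d : ℕ} (mhat : P2 d) (φ : P2 d → ℝ) (R : ℝ) : ℝ :=
  sSup {r : ℝ | 0 ≤ r ∧ ballW mhat r ⊆ Gset mhat φ R}

/-- `M_κ^ε(R) = κ√(2S(R)+ε²κ²) − εκ²`. -/
def Mke {d : ℕ} (mhat : P2 d) (φ : P2 d → ℝ) (κ ε R : ℝ) : ℝ :=
  κ * Real.sqrt (2 * Sfun mhat φ R + ε ^ 2 * κ ^ 2) - ε * κ ^ 2

/-- `M^ε(R) = R + √(2S(R)+ε²)`. -/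
def Me {d : ℕ} (mhat : P2 d) (φ : P2 d → ℝ) (ε R : ℝ) : ℝ :=
  R + Real.sqrt (2 * Sfun mhat φ R + ε ^ 2)

/-- `ω_R^ε(δ)`, the modulus of continuity of `φ` on `B_{M^ε(R)}(m̂)`. -/
def omegaR {d : ℕ} (mhat : P2 d) (φ : P2 d → ℝ) (ε R δ : ℝ) : ℝ :=
  sSup {c : ℝ | ∃ ν₁ ν₂ : P2 d, W2 ν₁ ν₂ ≤ δ ∧ W2 mhat ν₁ ≤ Me mhat φ ε R ∧
    W2 mhat ν₂ ≤ Me mhat φ ε R ∧ c = |φ ν₁ - φ ν₂|}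

/-- `K_κ^ε(R) = εκ² + κ√(ε²κ² + 2ω_R^ε(M_κ^ε(R)))`. -/
def Kke {d : ℕ} (mhat : P2 d) (φ : P2 d → ℝ) (κ ε R : ℝ) : ℝ :=
  ε * κ ^ 2 + κ * Real.sqrt (ε ^ 2 * κ ^ 2 + 2 * omegaR mhat φ ε R (Mke mhat φ κ ε R))

/-- `N_κ^ε(R,m) = εκ√(2φ_κ(m)) + ε·M_κ^ε(R)`. -/
def Nke {d : ℕ} (mhat : P2 d) (φ : P2 d → ℝ) (κ ε R : ℝ) (m : P2 d) : ℝ :=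
  ε * κ * Real.sqrt (2 * infConv φ κ m) + ε * Mke mhat φ κ ε R

/-- `μ̄` is an Ekeland point for `(φ,κ,ε,m)`. -/
def EkelandPt {d : ℕ} (φ : P2 d → ℝ) (κ ε : ℝ) (m μb : P2 d) : Prop :=
  (φ μb + 1 / (2 * κ ^ 2) * W2 m μb ^ 2 ≤ φ m - ε * W2 μb m) ∧
  ∀ μ : P2 d, φ μb + 1 / (2 * κ ^ 2) * W2 m μb ^ 2 ≤
    φ μ + 1 / (2 * κ ^ 2) * W2 m μ ^ 2 + ε * W2 μb μ

/-- The proximal subgradient inequality at `m` with target `μ`, slope measure `α`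
and parameter `σ`. -/
def ProxIneq {d : ℕ} (φ : P2 d → ℝ) (ε σ : ℝ) (m : P2 d)
    (α : Measure (Ed d × Ed d)) (μ : P2 d) : Prop :=
  ∀ β : Measure (Ed d × Ed d × Ed d), IsP2Meas β →
    IsCoupling (β.map fun z => (z.1, z.2.1)) m μ →
    β.map (fun z => (z.1, z.2.2)) = α →
    φ m + ∫ z, ⟪z.2.2, z.2.1 - z.1⟫_ℝ ∂β - σ * ∫ z, ‖z.2.1 - z.1‖ ^ 2 ∂β
      - ε * W2 m μ ≤ φ μ

/-- `α ∈ ∂_P^ε φ(m)` : proximal `ε`-subgradient. -/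
def ProxSubgrad {d : ℕ} (φ : P2 d → ℝ) (ε : ℝ) (m : P2 d)
    (α : Measure (Ed d × Ed d)) : Prop :=
  IsP2Meas α ∧ ∃ σ > (0 : ℝ), ∃ r > (0 : ℝ), ∀ μ : P2 d, W2 m μ ≤ r → ProxIneq φ ε σ m α μ

/-- `(φ,ψ)` is a control-Lyapunov pair at `m̂` for the dynamics `f`, with threshold `ε₀`. -/
structure IsCLP {d : ℕ} {U : Type*} (f : Ed d → P2 d → U → Ed d) (mhat : P2 d)
    (φ : P2 d → ℝ) (ψ : P2 d → ℝ → ℝ) (ε₀ : ℝ) : Prop where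
  phi_uc : UCmem mhat φ
  psi_pos : ∀ (m : P2 d) (ε : ℝ), 0 < ε → 0 < ψ m ε
  psi_cont : ∀ (m : P2 d) (ε : ℝ), 0 < ε → ∀ η > (0 : ℝ), ∃ δ > (0 : ℝ),
    ∀ (m' : P2 d) (ε' : ℝ), 0 < ε' → W2 m m' < δ → |ε - ε'| < δ → |ψ m ε - ψ m' ε'| < η
  level_bdd : ∀ c : ℝ, ∃ K : ℝ, ∀ μ : P2 d, φ μ ≤ c → W2 mhat μ ≤ K
  psi_inf_pos : ∀ r R : ℝ, 0 < r → r < R → ∀ ε > (0 : ℝ), ∃ g > (0 : ℝ),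
    ∀ m : P2 d, W2 mhat m ≤ R → ¬ W2 mhat m < r → g ≤ ψ m ε
  psi_mono : ∀ (m : P2 d) (ε ε' : ℝ), 0 < ε → ε ≤ ε' → ψ m ε ≤ ψ m ε'
  eps0_pos : 0 < ε₀
  decrease : ∀ ε : ℝ, 0 < ε → ε < ε₀ → ∀ (m : P2 d) (α : Measure (Ed d × Ed d)),
    ProxSubgrad φ ε m α → ∃ u : U, ∫ z, ⟪z.2, f z.1 m u⟫_ℝ ∂α ≤ -ψ m ε

/-- A partition of `[0,∞)`. -/
def IsPartition (θ : ℕ → ℝ) : Prop :=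
  θ 0 = 0 ∧ StrictMono θ ∧ Tendsto θ atTop atTop

/-- The steps of the partition `θ` lie in `[δ₁, δ₂]` (i.e. `θ ∈ Θ(δ₁,δ₂)`). -/
def StepIn (θ : ℕ → ℝ) (δ₁ δ₂ : ℝ) : Prop :=
  ∀ i : ℕ, δ₁ ≤ θ (i + 1) - θ i ∧ θ (i + 1) - θ i ≤ δ₂

/-- `W₂`-continuity of a measure-valued curve on `[a,b]`. -/
def W2ContinuousOn {d : ℕ} (m : ℝ → P2 d) (a b : ℝ) : Prop :=
  ∀ t ∈ Icc a b, ∀ η > (0 : ℝ), ∃ δ > (0 : ℝ), ∀ s ∈ Icc a b, |s - t| < δ →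
    W2 (m s) (m t) < η

/-- `m` is a `W₂`-continuous distributional solution of the non-local continuity equation
`∂_t m_t + div(f(x,m_t,u) m_t) = 0` on `[a,b]` with constant control `u`. -/
def SolvesCE {d : ℕ} {U : Type*} (f : Ed d → P2 d → U → Ed d) (u : U)
    (m : ℝ → P2 d) (a b : ℝ) : Prop :=
  W2ContinuousOn m a b ∧
  ∀ χ : Ed d × ℝ → ℝ, ContDiff ℝ (⊤ : ℕ∞) χ → HasCompactSupport χ →
    tsupport χ ⊆ univ ×ˢ Ioo a b →
    ∫ t in a..b, ∫ x, (deriv (fun s : ℝ => χ (x, s)) t +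
      fderiv ℝ (fun y : Ed d => χ (y, t)) x (f x (m t) u)) ∂(m t).1 = 0

/-- A `θ`-trajectory of the controlled continuity equation under the feedback `k`,
starting from `m_*`. -/
def IsTraj {d : ℕ} {U : Type*} (f : Ed d → P2 d → U → Ed d) (k : P2 d → U)
    (θ : ℕ → ℝ) (mstar : P2 d) (m : ℝ → P2 d) : Prop :=
  m 0 = mstar ∧ ∀ i : ℕ, SolvesCE f (k (m (θ i))) m (θ i) (θ (i + 1))

/-- The extremal-shift value `∫ ((x−y)/κ²)·f(x,m,u) dπ(x,y)`. -/
def shiftVal {d : ℕ} {U : Type*} (f : Ed d → P2 d → U → Ed d) (κ : ℝ)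
    (π : Measure (Ed d × Ed d)) (m : P2 d) (u : U) : ℝ :=
  ∫ p, ⟪(κ ^ 2)⁻¹ • (p.1 - p.2), f p.1 m u⟫_ℝ ∂π

/-- `k` is an extremal-shift feedback associated with the plan selection `πsel`. -/
def IsExtremalShift {d : ℕ} {U : Type*} (f : Ed d → P2 d → U → Ed d) (κ : ℝ)
    (πsel : P2 d → Measure (Ed d × Ed d)) (k : P2 d → U) : Prop :=
  ∀ (m : P2 d) (u : U), shiftVal f κ (πsel m) m (k m) ≤ shiftVal f κ (πsel m) m u

/-- `C₂(R)` (computed with time-step bound `δ` and `s = ς₂(m̂)`). -/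
def C2const (C₁ δ s R : ℝ) : ℝ :=
  C₁ * Real.exp (C₁ * δ) * (1 + 2 * (C₁ * δ + s + R) * Real.exp (2 * C₁ * δ))

/-- `C₃(R)` (computed with time-step bound `δ` and `s = ς₂(m̂)`). -/
def C3const (C₀ C₁ δ s R : ℝ) : ℝ :=
  C₀ * (C₁ * Real.exp (C₁ * δ) * (1 + 2 * (C₁ * δ + s + R) * Real.exp (2 * C₁ * δ))
    + C2const C₁ δ s R)

/-- A feedback `k` is s-stabilizing at `m̂`. -/
def SStabilizing {d : ℕ} {U : Type*} (f : Ed d → P2 d → U → Ed d) (mhat : P2 d)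
    (k : P2 d → U) : Prop :=
  ∃ M : ℝ → ℝ, (∀ R > (0 : ℝ), 0 < M R) ∧
    Tendsto M (nhdsWithin 0 (Ioi 0)) (nhds 0) ∧
    ∀ r R : ℝ, 0 < r → r < R → ∃ δ > (0 : ℝ), ∃ T > (0 : ℝ),
      ∀ δhat : ℝ, 0 < δhat → δhat < δ →
      ∀ θ : ℕ → ℝ, IsPartition θ → StepIn θ δhat δ →
      ∀ mstar : P2 d, W2 mhat mstar ≤ R →
      ∀ m : ℝ → P2 d, IsTraj f k θ mstar m →
        (∀ t : ℝ, T ≤ t → W2 mhat (m t) ≤ r) ∧ (∀ t : ℝ, 0 ≤ t → W2 mhat (m t) ≤ M R)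

/-! Write `W = W₂(m, μ̄)`. Inequality (i) for an Ekeland point gives
`W² / (2κ²) + εW ≤ φ(m) − φ(μ̄)`. Bounding the right side by `S(R)` and solving the quadratic
gives `W ≤ M_κ^ε(R)` and `W ≤ √(2S(R) + ε²)`, hence (2) by the triangle inequality. Then `m` and
`μ̄` both lie in `B_{M^ε(R)}(m̂)` at distance at most `M_κ^ε(R)`, so the right side is also bounded
by `ω_R^ε(M_κ^ε(R))`, and solving the quadratic again gives (1).

The suprema `S` and `ω` are finite because a function that is uniformly continuous on bounded
sets of `P₂` is bounded on bounded sets: along a displacement interpolation from `m̂` it moves by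
at most one per step of a fixed length. The triangle inequality for `W₂` comes from gluing two
near-optimal plans along their common marginal and Minkowski's inequality in `L²`. -/

open ProbabilityTheory

section L2

variable {α E : Type*} [MeasurableSpace α] [NormedAddCommGroup E] {μ : Measure α}

lemma lintegral_nnnorm_sq_eq_eLpNorm_sq (f : α → E) :
    ∫⁻ x, (‖f x‖₊ : ℝ≥0∞) ^ 2 ∂μ = eLpNorm f 2 μ ^ 2 := by
  simpa [← enorm_eq_nnnorm] using
    (eLpNorm_nnreal_pow_eq_lintegral (f := f) (μ := μ) (p := 2) two_ne_zero).symm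

lemma memLp_two_iff_lintegral_nnnorm_sq_lt_top {f : α → E} (hf : AEStronglyMeasurable f μ) :
    MemLp f 2 μ ↔ ∫⁻ x, (‖f x‖₊ : ℝ≥0∞) ^ 2 ∂μ < ⊤ := by
  rw [lintegral_nnnorm_sq_eq_eLpNorm_sq, lt_top_iff_ne_top, Ne, ENNReal.pow_eq_top_iff]
  simp [MemLp, hf, lt_top_iff_ne_top]

end L2

lemma MeasureTheory.Measure.exists_gluing {X Y Z : Type*} [MeasurableSpace X] [MeasurableSpace Y]
    [MeasurableSpace Z] [StandardBorelSpace Z] [Nonempty Z]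
    (π₁ : Measure (X × Y)) (π₂ : Measure (Y × Z)) [IsFiniteMeasure π₁] [IsFiniteMeasure π₂]
    (h : π₁.snd = π₂.fst) :
    ∃ β : Measure ((X × Y) × Z), β.map Prod.fst = π₁ ∧ β.map (fun p => (p.1.2, p.2)) = π₂ := by
  refine ⟨π₁ ⊗ₘ π₂.condKernel.comap Prod.snd measurable_snd, Measure.fst_compProd _ _, ?_⟩
  conv_rhs => rw [← π₂.disintegrate π₂.condKernel, ← h]
  ext s hs
  rw [Measure.map_apply (by fun_prop) hs, Measure.compProd_apply (hs.preimage (by fun_prop)),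
    Measure.compProd_apply hs, Measure.snd, lintegral_map _ measurable_snd]
  · rfl
  · exact Kernel.measurable_kernel_prodMk_left hs

variable {d : ℕ}

lemma IsP2Meas.memLp_id {μ : Measure (Ed d)} (h : IsP2Meas μ) : MemLp id 2 μ :=
  (memLp_two_iff_lintegral_nnnorm_sq_lt_top aestronglyMeasurable_id).2 h.2

lemma isP2Meas_map {α : Type*} [MeasurableSpace α] {π : Measure α} [IsProbabilityMeasure π]
    {F : α → Ed d} (hF : Measurable F) (h : MemLp F 2 π) : IsP2Meas (π.map F) := by
  refine ⟨Measure.isProbabilityMeasure_map hF.aemeasurable, ?_⟩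
  rw [lintegral_map (by fun_prop) hF]
  exact (memLp_two_iff_lintegral_nnnorm_sq_lt_top h.1).1 h

instance P2.isProbabilityMeasure (μ : P2 d) : IsProbabilityMeasure μ.1 := μ.2.1

def transportNorm (π : Measure (Ed d × Ed d)) : ℝ≥0∞ := eLpNorm (fun p => p.1 - p.2) 2 π

lemma Wcost_eq_transportNorm_sq (π : Measure (Ed d × Ed d)) : Wcost π = transportNorm π ^ 2 :=
  lintegral_nnnorm_sq_eq_eLpNorm_sq _

namespace IsCoupling

variable {π : Measure (Ed d × Ed d)} {μ ν : P2 d}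

lemma isProbabilityMeasure (h : IsCoupling π μ ν) : IsProbabilityMeasure π :=
  have : IsProbabilityMeasure (π.map Prod.fst) := h.1 ▸ μ.2.1
  Measure.isProbabilityMeasure_of_map Prod.fst

lemma memLp_fst (h : IsCoupling π μ ν) : MemLp Prod.fst 2 π :=
  (memLp_map_measure_iff aestronglyMeasurable_id measurable_fst.aemeasurable).1
    (h.1 ▸ μ.2.memLp_id)

lemma memLp_snd (h : IsCoupling π μ ν) : MemLp Prod.snd 2 π :=
  (memLp_map_measure_iff aestronglyMeasurable_id measurable_snd.aemeasurable).1
    (h.2 ▸ ν.2.memLp_id)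

lemma transportNorm_lt_top (h : IsCoupling π μ ν) : transportNorm π < ⊤ :=
  (h.memLp_fst.sub h.memLp_snd).eLpNorm_lt_top

lemma swap (h : IsCoupling π μ ν) : IsCoupling (π.map Prod.swap) ν μ :=
  ⟨by rw [Measure.map_map measurable_fst measurable_swap]; exact h.2,
    by rw [Measure.map_map measurable_snd measurable_swap]; exact h.1⟩

lemma prod (μ ν : P2 d) : IsCoupling (μ.1.prod ν.1) μ ν :=
  ⟨Measure.fst_prod, Measure.snd_prod⟩

end IsCoupling

lemma W2_nonneg (μ ν : P2 d) : 0 ≤ W2 μ ν := Real.sqrt_nonneg _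

lemma W2_le_transportNorm {π : Measure (Ed d × Ed d)} {μ ν : P2 d} (h : IsCoupling π μ ν) :
    W2 μ ν ≤ (transportNorm π).toReal := by
  have hcost : Wcost π ≠ ⊤ := by
    rw [Wcost_eq_transportNorm_sq]; exact ENNReal.pow_ne_top h.transportNorm_lt_top.ne
  calc W2 μ ν ≤ √(Wcost π).toReal :=
        Real.sqrt_le_sqrt (ENNReal.toReal_mono hcost (biInf_le _ h))
    _ = _ := by
      rw [Wcost_eq_transportNorm_sq, ENNReal.toReal_pow, Real.sqrt_sq ENNReal.toReal_nonneg]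

lemma exists_isCoupling_transportNorm_lt (μ ν : P2 d) {η : ℝ} (hη : 0 < η) :
    ∃ π, IsCoupling π μ ν ∧ (transportNorm π).toReal < W2 μ ν + η := by
  set I := ⨅ π ∈ {π : Measure (Ed d × Ed d) | IsCoupling π μ ν}, Wcost π
  have hI : I ≠ ⊤ := by
    refine ne_top_of_le_ne_top ?_ (biInf_le _ (IsCoupling.prod μ ν))
    rw [Wcost_eq_transportNorm_sq]
    exact ENNReal.pow_ne_top (IsCoupling.prod μ ν).transportNorm_lt_top.ne
  have hc : 0 < W2 μ ν + η := by linarith [W2_nonneg μ ν]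
  have hW : W2 μ ν ^ 2 = I.toReal := Real.sq_sqrt ENNReal.toReal_nonneg
  have hlt : I < ENNReal.ofReal ((W2 μ ν + η) ^ 2) := by
    rw [← ENNReal.ofReal_toReal hI, ENNReal.ofReal_lt_ofReal_iff (pow_pos hc 2), ← hW]
    nlinarith [W2_nonneg μ ν]
  obtain ⟨π, hπ, hcost⟩ :
      ∃ π, IsCoupling π μ ν ∧ Wcost π < ENNReal.ofReal ((W2 μ ν + η) ^ 2) := by
    simpa only [I, iInf_lt_iff, exists_prop, mem_ofPred_eq] using hlt
  refine ⟨π, hπ, lt_of_pow_lt_pow_left₀ 2 hc.le ?_⟩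
  rw [Wcost_eq_transportNorm_sq] at hcost
  simpa [ENNReal.toReal_pow, ENNReal.toReal_ofReal (sq_nonneg _)] using
    ENNReal.toReal_strict_mono ENNReal.ofReal_ne_top hcost

lemma W2_comm (μ ν : P2 d) : W2 μ ν = W2 ν μ := by
  suffices key : ∀ μ ν : P2 d, W2 ν μ ≤ W2 μ ν from le_antisymm (key ν μ) (key μ ν)
  intro μ ν
  refine le_of_forall_pos_lt_add fun η hη => ?_
  obtain ⟨π, hπ, hlt⟩ := exists_isCoupling_transportNorm_lt μ ν hη
  refine (W2_le_transportNorm hπ.swap).trans_lt (lt_of_eq_of_lt ?_ hlt)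
  rw [transportNorm, transportNorm, eLpNorm_map_measure (by fun_prop) (by fun_prop),
    ← eLpNorm_neg]
  congr 2 with p
  simp

lemma W2_triangle (μ ν ρ : P2 d) : W2 μ ρ ≤ W2 μ ν + W2 ν ρ := by
  refine le_of_forall_pos_lt_add fun η hη => ?_
  obtain ⟨π₁, h₁, hlt₁⟩ := exists_isCoupling_transportNorm_lt μ ν (half_pos hη)
  obtain ⟨π₂, h₂, hlt₂⟩ := exists_isCoupling_transportNorm_lt ν ρ (half_pos hη)
  have := h₁.isProbabilityMeasure
  have := h₂.isProbabilityMeasure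
  obtain ⟨β, hβ₁, hβ₂⟩ := Measure.exists_gluing π₁ π₂ (h₁.2.trans h₂.1.symm)
  have hγ : IsCoupling (β.map fun p => (p.1.1, p.2)) μ ρ := by
    constructor
    · rw [Measure.map_map measurable_fst (by fun_prop), ← h₁.1, ← hβ₁,
        Measure.map_map measurable_fst measurable_fst]
      rfl
    · rw [Measure.map_map measurable_snd (by fun_prop), ← h₂.2, ← hβ₂,
        Measure.map_map measurable_snd (by fun_prop)]
      rfl
  have key : transportNorm (β.map fun p => (p.1.1, p.2)) ≤
      transportNorm π₁ + transportNorm π₂ := by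
    simp only [← hβ₁, ← hβ₂, transportNorm]
    rw [eLpNorm_map_measure (by fun_prop) (by fun_prop),
      eLpNorm_map_measure (by fun_prop) (by fun_prop),
      eLpNorm_map_measure (by fun_prop) (by fun_prop)]
    convert eLpNorm_add_le (f := fun p : (Ed d × Ed d) × Ed d => p.1.1 - p.1.2)
      (g := fun p => p.1.2 - p.2) (μ := β) (by fun_prop) (by fun_prop) one_le_two using 2
    · ext p
      simp
    all_goals rfl
  calc W2 μ ρ ≤ _ := W2_le_transportNorm hγ
    _ ≤ (transportNorm π₁).toReal + (transportNorm π₂).toReal := by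
      rw [← ENNReal.toReal_add h₁.transportNorm_lt_top.ne h₂.transportNorm_lt_top.ne]
      exact ENNReal.toReal_mono
        (ENNReal.add_ne_top.2 ⟨h₁.transportNorm_lt_top.ne, h₂.transportNorm_lt_top.ne⟩) key
    _ < W2 μ ν + η / 2 + (W2 ν ρ + η / 2) := add_lt_add hlt₁ hlt₂
    _ = W2 μ ν + W2 ν ρ + η := by ring

namespace IsCoupling

variable {π : Measure (Ed d × Ed d)} {μ ν : P2 d}

def interp (h : IsCoupling π μ ν) (t : ℝ) : P2 d :=
  ⟨π.map fun p => (1 - t) • p.1 + t • p.2, by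
    have := h.isProbabilityMeasure
    exact isP2Meas_map (by fun_prop) ((h.memLp_fst.const_smul (1 - t)).add
      (h.memLp_snd.const_smul t))⟩

lemma interp_zero (h : IsCoupling π μ ν) : h.interp 0 = μ :=
  Subtype.ext <| by simpa [interp] using h.1

lemma interp_one (h : IsCoupling π μ ν) : h.interp 1 = ν :=
  Subtype.ext <| by simpa [interp] using h.2

lemma W2_interp_le (h : IsCoupling π μ ν) (s t : ℝ) :
    W2 (h.interp s) (h.interp t) ≤ |t - s| * (transportNorm π).toReal := by
  have hc : IsCoupling (π.map fun p => ((1 - s) • p.1 + s • p.2, (1 - t) • p.1 + t • p.2))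
      (h.interp s) (h.interp t) := by
    constructor <;>
    · rw [Measure.map_map (by fun_prop) (by fun_prop)]
      rfl
  refine (W2_le_transportNorm hc).trans_eq ?_
  rw [transportNorm, transportNorm, eLpNorm_map_measure (by fun_prop) (by fun_prop)]
  have hdiff : (fun p : Ed d × Ed d => p.1 - p.2) ∘
      (fun p : Ed d × Ed d => ((1 - s) • p.1 + s • p.2, (1 - t) • p.1 + t • p.2)) =
      (t - s) • fun p : Ed d × Ed d => p.1 - p.2 := by
    ext p : 1
    simp only [Function.comp_apply, Pi.smul_apply]
    module
  rw [hdiff, eLpNorm_const_smul, ENNReal.toReal_mul, toReal_enorm, Real.norm_eq_abs]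

end IsCoupling

lemma le_add_natCast_of_abs_sub_le_inv {f : ℝ → ℝ} {N : ℕ} (hN : 0 < N)
    (h : ∀ s ∈ Icc (0 : ℝ) 1, ∀ t ∈ Icc (0 : ℝ) 1, |t - s| ≤ 1 / N → f t ≤ f s + 1) :
    f 1 ≤ f 0 + N := by
  have hN' : (0 : ℝ) < N := Nat.cast_pos.2 hN
  have hmem : ∀ i ≤ N, (i / N : ℝ) ∈ Icc (0 : ℝ) 1 := fun i hi =>
    ⟨by positivity, (div_le_one hN').2 (Nat.cast_le.2 hi)⟩
  have key : ∀ i ≤ N, f (i / N) ≤ f 0 + i := by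
    intro i hi
    induction i with
    | zero => simp
    | succ i ih =>
      have hstep : |((i + 1 : ℕ) / N : ℝ) - i / N| ≤ 1 / N := by
        rw [Nat.cast_succ, ← sub_div, add_sub_cancel_left, abs_of_pos (by positivity)]
      have := h _ (hmem i (by omega)) _ (hmem (i + 1) hi) hstep
      push_cast at this ⊢
      linarith [ih (by omega)]
  simpa [div_self hN'.ne'] using key N le_rfl

lemma UCmem.bddAbove_image_ballW {mhat : P2 d} {φ : P2 d → ℝ} (hφ : UCmem mhat φ) (M : ℝ) :
    BddAbove (φ '' ballW mhat M) := by
  set R := |M| + 1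
  obtain ⟨δ, hδ, hUC⟩ := hφ.unif_cont R (by positivity) 1 one_pos
  obtain ⟨N, hN⟩ := exists_nat_gt (R / δ)
  have hN0 : (0 : ℝ) < N := (by positivity : 0 < R / δ).trans hN
  refine ⟨N, ?_⟩
  rintro _ ⟨μ, hμ, rfl⟩
  obtain ⟨π, hπ, hL⟩ := exists_isCoupling_transportNorm_lt mhat μ one_pos
  set L := (transportNorm π).toReal
  have hLR : L ≤ R := by linarith [show W2 mhat μ ≤ M from hμ, le_abs_self M]
  have hball : ∀ t ∈ Icc (0 : ℝ) 1, W2 mhat (hπ.interp t) ≤ R := fun t ht =>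
    calc W2 mhat (hπ.interp t) = W2 (hπ.interp 0) (hπ.interp t) := by rw [hπ.interp_zero]
      _ ≤ |t - 0| * L := hπ.W2_interp_le 0 t
      _ ≤ 1 * R := by
        rw [sub_zero, abs_of_nonneg ht.1]
        exact mul_le_mul ht.2 hLR ENNReal.toReal_nonneg zero_le_one
      _ = R := one_mul R
  have hchain := le_add_natCast_of_abs_sub_le_inv (f := fun t => φ (hπ.interp t))
    (Nat.cast_pos.1 hN0) fun s hs t ht hst => by
      have hclose : W2 (hπ.interp t) (hπ.interp s) ≤ δ :=
        calc W2 (hπ.interp t) (hπ.interp s) ≤ |s - t| * L := hπ.W2_interp_le t s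
          _ ≤ 1 / N * R := by
            rw [abs_sub_comm]
            exact mul_le_mul hst hLR ENNReal.toReal_nonneg (by positivity)
          _ ≤ δ := by
            rw [div_lt_iff₀ hδ] at hN
            rw [div_mul_eq_mul_div, one_mul, div_le_iff₀ hN0]
            linarith
      linarith [(abs_le.1 (hUC _ _ (hball t ht) (hball s hs) hclose)).2]
  simpa [hπ.interp_zero, hπ.interp_one, hφ.zero_at] using hchain

lemma UCmem.le_Sfun {mhat : P2 d} {φ : P2 d → ℝ} (hφ : UCmem mhat φ) {R : ℝ} {μ : P2 d}
    (hμ : W2 mhat μ ≤ R) : φ μ ≤ Sfun mhat φ R :=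
  le_csSup (hφ.bddAbove_image_ballW R) ⟨μ, hμ, rfl⟩

lemma UCmem.abs_sub_le_omegaR {mhat : P2 d} {φ : P2 d → ℝ} (hφ : UCmem mhat φ) {ε R δ : ℝ}
    {ν₁ ν₂ : P2 d} (h : W2 ν₁ ν₂ ≤ δ) (h₁ : W2 mhat ν₁ ≤ Me mhat φ ε R)
    (h₂ : W2 mhat ν₂ ≤ Me mhat φ ε R) : |φ ν₁ - φ ν₂| ≤ omegaR mhat φ ε R δ := by
  obtain ⟨C, hC⟩ := hφ.bddAbove_image_ballW (Me mhat φ ε R)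
  refine le_csSup ⟨C, ?_⟩ ⟨ν₁, ν₂, h, h₁, h₂, rfl⟩
  rintro _ ⟨μ₁, μ₂, -, hμ₁, hμ₂, rfl⟩
  exact abs_sub_le_of_nonneg_of_le (hφ.nonneg μ₁) (hC ⟨μ₁, hμ₁, rfl⟩) (hφ.nonneg μ₂)
    (hC ⟨μ₂, hμ₂, rfl⟩)

lemma le_mul_sqrt_sub_of_sq_div_add_le {κ ε W X : ℝ} (hκ : 0 < κ)
    (h : 1 / (2 * κ ^ 2) * W ^ 2 + ε * W ≤ X) :
    W ≤ κ * √(2 * X + ε ^ 2 * κ ^ 2) - ε * κ ^ 2 := by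
  have hsq : (W + ε * κ ^ 2) ^ 2 ≤ κ ^ 2 * (2 * X + ε ^ 2 * κ ^ 2) := by
    have h2 : 2 * κ ^ 2 * (1 / (2 * κ ^ 2) * W ^ 2 + ε * W) = W ^ 2 + 2 * ε * κ ^ 2 * W := by
      field_simp
    nlinarith [mul_le_mul_of_nonneg_left h (by positivity : 0 ≤ 2 * κ ^ 2)]
  have := (le_abs_self _).trans (Real.abs_le_sqrt hsq)
  rw [Real.sqrt_mul (sq_nonneg κ), Real.sqrt_sq hκ.le] at this
  linarith

lemma le_sqrt_of_sq_div_add_le {κ ε W X : ℝ} (hκ : κ ∈ Ioc (0 : ℝ) 1) (hε : 0 ≤ ε)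
    (hW : 0 ≤ W) (h : 1 / (2 * κ ^ 2) * W ^ 2 + ε * W ≤ X) : W ≤ √(2 * X + ε ^ 2) := by
  have hκ2 : κ ^ 2 ≤ 1 := pow_le_one₀ hκ.1.le hκ.2
  have hq : W ^ 2 = 2 * κ ^ 2 * (1 / (2 * κ ^ 2) * W ^ 2) := by
    field_simp [hκ.1.ne']
  have hsq : W ^ 2 ≤ 2 * X + ε ^ 2 := by
    nlinarith [mul_le_mul_of_nonneg_right hκ2 (by positivity : 0 ≤ 1 / (2 * κ ^ 2) * W ^ 2),
      mul_nonneg hε hW]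
  simpa [abs_of_nonneg hW] using Real.abs_le_sqrt hsq

lemma EkelandPt.sq_div_add_le {φ : P2 d → ℝ} {κ ε : ℝ} {m μb : P2 d}
    (h : EkelandPt φ κ ε m μb) :
    1 / (2 * κ ^ 2) * W2 m μb ^ 2 + ε * W2 m μb ≤ φ m - φ μb := by
  linarith [W2_comm μb m ▸ h.1]

theorem statement4_general {d : ℕ} (mhat : P2 d) (R : ℝ)
    (φ : P2 d → ℝ) (hφ : UCmem mhat φ) (κ ε : ℝ) (hκ : κ ∈ Ioc (0 : ℝ) 1)
    (hε : ε ∈ Ioc (0 : ℝ) 1)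
    (m : P2 d) (hm : W2 mhat m ≤ R) (μb : P2 d) (hek : EkelandPt φ κ ε m μb) :
    W2 m μb ≤ Kke mhat φ κ ε R ∧ W2 mhat μb ≤ Me mhat φ ε R := by
  have hgap : 1 / (2 * κ ^ 2) * W2 m μb ^ 2 + ε * W2 m μb ≤ Sfun mhat φ R := by
    linarith [hek.sq_div_add_le, hφ.nonneg μb, hφ.le_Sfun hm]
  have hnear : W2 m μb ≤ Mke mhat φ κ ε R := le_mul_sqrt_sub_of_sq_div_add_le hκ.1 hgap
  have hfar : W2 mhat μb ≤ Me mhat φ ε R :=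
    (W2_triangle mhat m μb).trans <| add_le_add hm <|
      le_sqrt_of_sq_div_add_le hκ hε.1.le (W2_nonneg m μb) hgap
  have hm' : W2 mhat m ≤ Me mhat φ ε R := hm.trans (le_add_of_nonneg_right (Real.sqrt_nonneg _))
  have hω : φ m - φ μb ≤ omegaR mhat φ ε R (Mke mhat φ κ ε R) :=
    (le_abs_self _).trans (hφ.abs_sub_le_omegaR hnear hm' hfar)
  refine ⟨?_, hfar⟩
  have hK := le_mul_sqrt_sub_of_sq_div_add_le hκ.1 (hek.sq_div_add_le.trans hω)
  rw [add_comm (2 * _)] at hK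
  unfold Kke
  linarith [mul_nonneg hε.1.le (sq_nonneg κ)]

/-- further distance estimates for Ekeland points. -/
theorem statement4 {d : ℕ} (mhat : P2 d) (R : ℝ) (hR : 0 < R)
    (φ : P2 d → ℝ) (hφ : UCmem mhat φ) (κ ε : ℝ) (hκ : κ ∈ Ioc (0 : ℝ) 1)
    (hε : ε ∈ Ioc (0 : ℝ) 1)
    (m : P2 d) (hm : W2 mhat m ≤ R) (μb : P2 d) (hek : EkelandPt φ κ ε m μb) :
    W2 m μb ≤ Kke mhat φ κ ε R ∧ W2 mhat μb ≤ Me mhat φ ε R :=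
  statement4_general mhat R φ hφ κ ε hκ hε m hm μb hek
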